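/- Let C be a full commutative C*-category and A an object. Then the restriction map [ω] ↦ ω|_{C_{AA}}, from the base spectrum Sp_b(C) (unitary equivalence classes of *-functors C → ℂ) to the Gelfand spectrum of the commutative unital C*-algebra C_{AA}, is a well-defined bijection. -/

import Mathlib

open ComplexConjugate

/-- A C*-category: Hom spaces are complex Banach spaces, composition is bilinear and
submultiplicative, and there is an antilinear involutive contravariant *-operation fixing
objects, satisfying the C*-identity and positivity. -/
class CStarCat (O : Type*) (Hom : O → O → Type*)
    [∀ A B, NormedAddCommGroup (Hom A B)] [∀ A B, NormedSpace ℂ (Hom A B)] where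
  complete : ∀ A B, CompleteSpace (Hom A B)
  comp : ∀ {A B C : O}, Hom A B → Hom B C → Hom A C
  ide : ∀ A : O, Hom A A
  comp_assoc : ∀ {A B C D : O} (x : Hom A B) (y : Hom B C) (z : Hom C D),
      comp (comp x y) z = comp x (comp y z)
  ide_comp : ∀ {A B : O} (x : Hom A B), comp (ide A) x = x
  comp_ide : ∀ {A B : O} (x : Hom A B), comp x (ide B) = x
  comp_add_left : ∀ {A B C : O} (x y : Hom A B) (z : Hom B C),
      comp (x + y) z = comp x z + comp y z
  comp_add_right : ∀ {A B C : O} (x : Hom A B) (y z : Hom B C),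
      comp x (y + z) = comp x y + comp x z
  comp_smul_left : ∀ {A B C : O} (c : ℂ) (x : Hom A B) (z : Hom B C),
      comp (c • x) z = c • comp x z
  comp_smul_right : ∀ {A B C : O} (c : ℂ) (x : Hom A B) (z : Hom B C),
      comp x (c • z) = c • comp x z
  norm_comp_le : ∀ {A B C : O} (x : Hom A B) (y : Hom B C), ‖comp x y‖ ≤ ‖x‖ * ‖y‖
  invol : ∀ {A B : O}, Hom A B → Hom B A
  invol_invol : ∀ {A B : O} (x : Hom A B), invol (invol x) = x
  invol_add : ∀ {A B : O} (x y : Hom A B), invol (x + y) = invol x + invol y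
  invol_smul : ∀ {A B : O} (c : ℂ) (x : Hom A B), invol (c • x) = (conj c) • invol x
  invol_comp : ∀ {A B C : O} (x : Hom A B) (y : Hom B C),
      invol (comp x y) = comp (invol y) (invol x)
  norm_invol_comp : ∀ {A B : O} (x : Hom A B), ‖comp (invol x) x‖ = ‖x‖ ^ 2
  pos : ∀ {A B : O} (x : Hom A B), ∃ y : Hom B B, comp (invol x) x = comp (invol y) y

/-- A ℂ-valued *-functor on a C*-category (ℂ viewed as a one-object C*-category). -/
structure CChar (O : Type*) (Hom : O → O → Type*)
    [∀ A B, NormedAddCommGroup (Hom A B)] [∀ A B, NormedSpace ℂ (Hom A B)]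
    [CStarCat O Hom] where
  ω : ∀ {A B : O}, Hom A B → ℂ
  map_add : ∀ {A B : O} (x y : Hom A B), ω (x + y) = ω x + ω y
  map_smul : ∀ {A B : O} (c : ℂ) (x : Hom A B), ω (c • x) = c * ω x
  map_comp : ∀ {A B C : O} (x : Hom A B) (y : Hom B C),
      ω (CStarCat.comp x y) = ω x * ω y
  map_ide : ∀ A : O, ω (CStarCat.ide A) = 1
  map_invol : ∀ {A B : O} (x : Hom A B), ω (CStarCat.invol x) = conj (ω x)

/-- Unitary equivalence of ℂ-valued *-functors, by a unitary natural transformation. -/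
def UnitEquiv {O : Type*} {Hom : O → O → Type*}
    [∀ A B, NormedAddCommGroup (Hom A B)] [∀ A B, NormedSpace ℂ (Hom A B)]
    [CStarCat O Hom] (ω ω' : CChar O Hom) : Prop :=
  ∃ ν : O → ℂ, (∀ A, ‖ν A‖ = 1) ∧
    ∀ {A B : O} (x : Hom A B), ω'.ω x * ν B = ν A * ω.ω x

/-- A C*-category is commutative if every diagonal block is a commutative C*-algebra. -/
def IsCommutative (O : Type*) (Hom : O → O → Type*)
    [∀ A B, NormedAddCommGroup (Hom A B)] [∀ A B, NormedSpace ℂ (Hom A B)]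
    [CStarCat O Hom] : Prop :=
  ∀ (A : O) (x y : Hom A A), CStarCat.comp x y = CStarCat.comp y x

/-- A C*-category is full if for all objects A, B the span of the products
C_{AB} ∘ C_{BA} is dense in C_{AA} (imprimitivity of the off-diagonal bimodules). -/
def IsFull (O : Type*) (Hom : O → O → Type*)
    [∀ A B, NormedAddCommGroup (Hom A B)] [∀ A B, NormedSpace ℂ (Hom A B)]
    [CStarCat O Hom] : Prop :=
  ∀ A B : O,
    closure ((Submodule.span ℂ
      {z : Hom A A | ∃ (x : Hom A B) (y : Hom B A), z = CStarCat.comp x y} :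
        Submodule ℂ (Hom A A)) : Set (Hom A A)) = Set.univ

/-- A character (unital *-homomorphism to ℂ) on the diagonal C*-algebra C_{AA}:
a point of the Gelfand spectrum of C_{AA}. -/
structure DiagChar (O : Type*) (Hom : O → O → Type*)
    [∀ A B, NormedAddCommGroup (Hom A B)] [∀ A B, NormedSpace ℂ (Hom A B)]
    [CStarCat O Hom] (A : O) where
  χ : Hom A A → ℂ
  map_add : ∀ x y : Hom A A, χ (x + y) = χ x + χ y
  map_smul : ∀ (c : ℂ) (x : Hom A A), χ (c • x) = c * χ x
  map_mul : ∀ x y : Hom A A, χ (CStarCat.comp x y) = χ x * χ y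
  map_one : χ (CStarCat.ide A) = 1
  map_star : ∀ x : Hom A A, χ (CStarCat.invol x) = conj (χ x)

/-! A character `χ` of `C_{AA}` extends to all of `C` by `ω(z) = χ(f_B ∘ z ∘ f_C*)`, where
each `f_B : A → B` is normalised by `χ(f_B ∘ f_B*) = 1`; such `f_B` exist because fullness
makes `χ` nonzero on `C_{AB} ∘ C_{BA}` (characters are continuous), and positivity turns a
product `x ∘ y` with `χ(x ∘ y) ≠ 0` into an element `f` with `χ(f ∘ f*) = |χ(x ∘ y)|²`.
Commutativity of `C_{CC}` makes `f_C* ∘ f_C` act on `χ` like the identity, so `ω` is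
multiplicative. The same normalised `f_B` give the unitary `ν_B = ω(f_B) · conj ω'(f_B)`
relating two functors that agree on `C_{AA}`. -/

namespace CStarCat

variable {O : Type*} {Hom : O → O → Type*}
    [∀ A B, NormedAddCommGroup (Hom A B)] [∀ A B, NormedSpace ℂ (Hom A B)]
    [CStarCat O Hom]

theorem zero_comp {A B C : O} (y : Hom B C) : comp (0 : Hom A B) y = 0 := by
  simpa using comp_smul_left (0 : ℂ) (0 : Hom A B) y

theorem comp_zero {A B C : O} (x : Hom A B) : comp x (0 : Hom B C) = 0 := by
  simpa using comp_smul_right (0 : ℂ) x (0 : Hom B C)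

abbrev endNormedRing (A : O) : NormedRing (Hom A A) :=
  { (inferInstance : NormedAddCommGroup (Hom A A)) with
    mul := comp
    one := ide A
    mul_assoc := comp_assoc
    one_mul := ide_comp
    mul_one := comp_ide
    left_distrib := comp_add_right
    right_distrib := comp_add_left
    zero_mul := zero_comp
    mul_zero := comp_zero
    norm_mul_le := norm_comp_le }

theorem comp_invol_smul {A B : O} (c : ℂ) (x : Hom A B) :
    comp (c • x) (invol (c • x)) = (c * conj c) • comp x (invol x) := by
  rw [invol_smul, CStarCat.comp_smul_left, CStarCat.comp_smul_right, smul_smul]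

end CStarCat

open CStarCat

section

variable {O : Type*} {Hom : O → O → Type*}
    [∀ A B, NormedAddCommGroup (Hom A B)] [∀ A B, NormedSpace ℂ (Hom A B)]
    [CStarCat O Hom]

theorem IsCommutative.comp_comp_comm_mid (hc : IsCommutative O Hom) {A C : O}
    (u : Hom A C) (m : Hom C C) (v : Hom C A) (p : Hom A C) (q : Hom C A) :
    comp (comp u (comp m v)) (comp p q) = comp (comp u v) (comp p (comp m q)) := by
  simp only [comp_assoc]
  rw [← comp_assoc v p q, ← comp_assoc m (comp v p) q, hc C m (comp v p)]
  simp only [comp_assoc]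

namespace DiagChar

variable {A : O} (χ : DiagChar O Hom A)

def toLinearMap : Hom A A →ₗ[ℂ] ℂ where
  toFun := χ.χ
  map_add' := χ.map_add
  map_smul' := χ.map_smul

theorem continuous : Continuous χ.χ := by
  let _ := endNormedRing (Hom := Hom) A
  let _ : NormedAlgebra ℂ (Hom A A) :=
    { Algebra.ofModule CStarCat.comp_smul_left CStarCat.comp_smul_right with
      norm_smul_le := norm_smul_le }
  have : CompleteSpace (Hom A A) := CStarCat.complete A A
  let φ : Hom A A →ₐ[ℂ] ℂ :=
    { χ.toLinearMap with
      map_one' := χ.map_one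
      map_mul' := χ.map_mul
      map_zero' := χ.toLinearMap.map_zero
      commutes' := fun c => by
        rw [Algebra.algebraMap_eq_smul_one]
        change χ.χ (c • ide A) = c
        rw [χ.map_smul, χ.map_one, mul_one] }
  exact map_continuous φ

theorem exists_comp_ne_zero (hf : IsFull O Hom) (B : O) :
    ∃ (x : Hom A B) (y : Hom B A), χ.χ (comp x y) ≠ 0 := by
  by_contra! h
  let ker : Submodule ℂ (Hom A A) := LinearMap.ker χ.toLinearMap
  have hker : IsClosed (ker : Set (Hom A A)) := isClosed_eq χ.continuous continuous_const
  have hspan : Submodule.span ℂ {z : Hom A A | ∃ (x : Hom A B) (y : Hom B A), z = comp x y}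
      ≤ ker := by
    rw [Submodule.span_le]
    rintro _ ⟨x, y, rfl⟩
    exact h x y
  have hide : ide A ∈ ker := closure_minimal hspan hker (hf A B ▸ Set.mem_univ _)
  exact one_ne_zero ((χ.map_one).symm.trans hide)

/-- The positivity axiom `y ∘ y* = n* ∘ n` lets `f = x ∘ n*` satisfy
`f ∘ f* = (x ∘ y) ∘ (x ∘ y)*`. -/
theorem exists_comp_invol_eq_one (hf : IsFull O Hom) (B : O) :
    ∃ f : Hom A B, χ.χ (comp f (invol f)) = 1 := by
  obtain ⟨x, y, hxy⟩ := χ.exists_comp_ne_zero hf B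
  obtain ⟨n, hn⟩ := CStarCat.pos (invol y)
  rw [invol_invol] at hn
  have hsq : comp (comp x (invol n)) (invol (comp x (invol n)))
      = comp (comp x y) (invol (comp x y)) := by
    simp only [invol_comp, invol_invol, comp_assoc]
    rw [← comp_assoc (invol n) n (invol x), ← hn, comp_assoc]
  refine ⟨(χ.χ (comp x y))⁻¹ • comp x (invol n), ?_⟩
  rw [comp_invol_smul, χ.map_smul, hsq, χ.map_mul, χ.map_star, map_inv₀]
  field_simp [hxy, (map_ne_zero conj).mpr hxy]

theorem map_comp_comp_invol_mid (hc : IsCommutative O Hom) {C : O} {f : Hom A C}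
    (hnorm : χ.χ (comp f (invol f)) = 1) (u : Hom A C) (v : Hom C A) :
    χ.χ (comp u (comp (comp (invol f) f) v)) = χ.χ (comp u v) := by
  have hff : comp f (comp (comp (invol f) f) (invol f))
      = comp (comp f (invol f)) (comp f (invol f)) := by
    simp only [comp_assoc]
  have h := congrArg χ.χ (hc.comp_comp_comm_mid u (comp (invol f) f) v f (invol f))
  rw [χ.map_mul (comp u _), χ.map_mul (comp u v), hff, χ.map_mul, hnorm] at h
  simpa only [mul_one] using h

def extend (hc : IsCommutative O Hom) (f : ∀ B, Hom A B)
    (hnorm : ∀ B, χ.χ (comp (f B) (invol (f B))) = 1) : CChar O Hom where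
  ω {B C} z := χ.χ (comp (f B) (comp z (invol (f C))))
  map_add x y := by rw [CStarCat.comp_add_left, CStarCat.comp_add_right, χ.map_add]
  map_smul c x := by rw [CStarCat.comp_smul_left, CStarCat.comp_smul_right, χ.map_smul]
  map_comp {B C D} z w := by
    have h := χ.map_comp_comp_invol_mid hc (hnorm C) (comp (f B) z) (comp w (invol (f D)))
    rw [← χ.map_mul]
    simpa only [comp_assoc] using h.symm
  map_ide B := by rw [ide_comp, hnorm B]
  map_invol {B C} z := by
    rw [← χ.map_star]
    simp only [invol_comp, invol_invol, comp_assoc]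

theorem extend_apply_endo (hc : IsCommutative O Hom) (f : ∀ B, Hom A B)
    (hnorm : ∀ B, χ.χ (comp (f B) (invol (f B))) = 1) (x : Hom A A) :
    (χ.extend hc f hnorm).ω x = χ.χ x := by
  change χ.χ (comp (f A) (comp x (invol (f A)))) = χ.χ x
  rw [χ.map_mul, χ.map_mul, mul_left_comm, ← χ.map_mul, hnorm A, mul_one]

theorem exists_extension (hc : IsCommutative O Hom) (hnorm : IsFull O Hom) :
    ∃ ω : CChar O Hom, ∀ x : Hom A A, ω.ω x = χ.χ x := by
  choose f hnorm using χ.exists_comp_invol_eq_one hnorm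
  exact ⟨χ.extend hc f hnorm, χ.extend_apply_endo hc f hnorm⟩

end DiagChar

namespace CChar

def restrict (ω : CChar O Hom) (A : O) : DiagChar O Hom A where
  χ := ω.ω
  map_add := ω.map_add
  map_smul := ω.map_smul
  map_mul := ω.map_comp
  map_one := ω.map_ide A
  map_star := ω.map_invol

theorem norm_eq_one_of_map_comp_invol {ω : CChar O Hom} {A B : O} {f : Hom A B}
    (hnorm : ω.ω (comp f (invol f)) = 1) : ‖ω.ω f‖ = 1 := by
  rw [ω.map_comp, ω.map_invol, Complex.mul_conj'] at hnorm
  exact (pow_eq_one_iff_of_nonneg (norm_nonneg _) two_ne_zero).mp (by exact_mod_cast hnorm)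

theorem map_comp_comp_invol_of_eqOn {ω ω' : CChar O Hom} {A : O}
    (h : ∀ x : Hom A A, ω.ω x = ω'.ω x) {B C : O} (g : Hom A B) (x : Hom B C) (k : Hom A C) :
    ω.ω g * ω.ω x * conj (ω.ω k) = ω'.ω g * ω'.ω x * conj (ω'.ω k) := by
  have := h (comp g (comp x (invol k)))
  rwa [ω.map_comp, ω.map_comp, ω.map_invol, ω'.map_comp, ω'.map_comp, ω'.map_invol,
    ← mul_assoc, ← mul_assoc] at this

end CChar

theorem UnitEquiv.eqOn_endo {ω ω' : CChar O Hom} (h : UnitEquiv ω ω') (A : O) (x : Hom A A) :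
    ω.ω x = ω'.ω x := by
  obtain ⟨ν, hν, hnat⟩ := h
  have hA : ν A ≠ 0 := by simp [← norm_ne_zero_iff, hν A]
  exact mul_left_cancel₀ hA (by rw [← hnat x, mul_comm])

theorem unitEquiv_of_eqOn_endo (hf : IsFull O Hom) {ω ω' : CChar O Hom} {A : O}
    (h : ∀ x : Hom A A, ω.ω x = ω'.ω x) : UnitEquiv ω ω' := by
  choose f hnorm using (ω.restrict A).exists_comp_invol_eq_one hf
  have hnorm' : ∀ B, ω'.ω (comp (f B) (invol (f B))) = 1 :=
    fun B => (h _).symm.trans (hnorm B)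
  have h1 : ∀ B, ω.ω (f B) * conj (ω.ω (f B)) = 1 := fun B => by
    rw [← ω.map_invol, ← ω.map_comp]; exact hnorm B
  have h1' : ∀ B, ω'.ω (f B) * conj (ω'.ω (f B)) = 1 := fun B => by
    rw [← ω'.map_invol, ← ω'.map_comp]; exact hnorm' B
  refine ⟨fun B => ω.ω (f B) * conj (ω'.ω (f B)), fun B => ?_, fun {B C} x => ?_⟩
  · rw [norm_mul, Complex.norm_conj, CChar.norm_eq_one_of_map_comp_invol (hnorm B),
      CChar.norm_eq_one_of_map_comp_invol (hnorm' B), one_mul]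
  · -- multiply `hx` by `conj ω'(f_B) · ω(f_C)` and cancel the unimodular factors
    have hx := CChar.map_comp_comp_invol_of_eqOn h (f B) x (f C)
    linear_combination (-(conj (ω'.ω (f B)) * ω.ω (f C))) * hx
      + (ω.ω (f B) * conj (ω'.ω (f B)) * ω.ω x) * h1 C
      - (ω'.ω x * conj (ω'.ω (f C)) * ω.ω (f C)) * h1' B

end

/-- For a full commutative C*-category C and an object A, the restriction
map [ω] ↦ ω|_{C_{AA}} from the base spectrum (unitary equivalence classes of ℂ-valued
*-functors) to the Gelfand spectrum of C_{AA} is a well-defined bijection: it is constant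
on equivalence classes, injective on classes, and surjective onto characters of C_{AA}. -/
theorem base_spectrum_restriction_bijective
    {O : Type*} {Hom : O → O → Type*}
    [∀ A B, NormedAddCommGroup (Hom A B)] [∀ A B, NormedSpace ℂ (Hom A B)]
    [CStarCat O Hom]
    (hc : IsCommutative O Hom) (hf : IsFull O Hom) (A : O) :
    (∀ ω ω' : CChar O Hom, UnitEquiv ω ω' → ∀ x : Hom A A, ω.ω x = ω'.ω x) ∧
    (∀ ω ω' : CChar O Hom, (∀ x : Hom A A, ω.ω x = ω'.ω x) → UnitEquiv ω ω') ∧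
    (∀ χ : DiagChar O Hom A, ∃ ω : CChar O Hom, ∀ x : Hom A A, ω.ω x = χ.χ x) :=
  ⟨fun _ _ h => h.eqOn_endo A, fun _ _ => unitEquiv_of_eqOn_endo hf,
    fun χ => χ.exists_extension hc hf⟩
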